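/- Let Θ and X be compact metric spaces, N ≥ 2, K > 0, and let J^N : Θ × X × X^{N−1} → ℝ be symmetric in the last N−1 variables and satisfy, for all θ_i, θ_j ∈ Θ and all (x_i, x_{-i}), (y_i, y_{-i}) ∈ X^N: |J^N(θ_i, x_i, x_{-i}) − J^N(θ_j, y_i, y_{-i})| ≤ K d_Θ(θ_i,θ_j) + K d_X(x_i,y_i) + K W_1((1/(N−1)) Σ_{j≠i} δ_{x_j}, (1/(N−1)) Σ_{j≠i} δ_{y_j}). Define the mixed extension J̄^N(θ, π_i, π_{-i}) := ∫_{X^N} J^N(θ, x, x_{-i}) π_i(dx) ⊗_{j≠i} π_j(dx_j). Then for every θ_i, θ_j ∈ Θ and every (π_i, π_{-i}), (η_i, η_{-i}) ∈ P(X)^N: |J̄^N(θ_i, π_i, π_{-i}) − J̄^N(θ_j, η_i, η_{-i})| ≤ K d_Θ(θ_i, θ_j) + K W_1(π_i, η_i) + K min_{σ ∈ S_{N−1}} (1/(N−1)) Σ_{j≠i} W_1(π_j, η_{σ(j)}), where S_{N−1} is the set of permutations of the indices j ≠ i. -/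

import Mathlib

/-! Couple the two mixed profiles factor by factor: ε-optimal couplings of `π, η` and of each
`p j, q j` multiply to a coupling of the two product measures, and integrating the pointwise
Lipschitz bound against it bounds the difference of the mixed extensions. The Wasserstein term of
the pointwise bound is controlled by the diagonal coupling of two empirical measures, which matches
the `j`-th atoms. The symmetry of `J` lets one first reorder the measures `q j` by a permutation
attaining the minimum. -/

open MeasureTheory
open scoped ENNReal NNReal

/-- The set of transport plans (couplings) between two probability measures. -/
def Couplings {Θ X : Type*} [MeasurableSpace Θ] [MeasurableSpace X]
    (μ : Measure Θ) (ν : Measure X) : Set (Measure (Θ × X)) :=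
  {γ | IsProbabilityMeasure γ ∧ γ.map Prod.fst = μ ∧ γ.map Prod.snd = ν}

/-- The value of the Monge-Kantorovich optimal transport problem for the cost `c`. -/
noncomputable def transportCost {Θ X : Type*} [MeasurableSpace Θ] [MeasurableSpace X]
    (c : Θ → X → ℝ) (μ : Measure Θ) (ν : Measure X) : ℝ :=
  sInf ((fun γ => ∫ p, c p.1 p.2 ∂γ) '' Couplings μ ν)

/-- The 1-Wasserstein distance. -/
noncomputable def W1 {X : Type*} [MeasurableSpace X] [PseudoMetricSpace X]
    (μ ν : Measure X) : ℝ :=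
  transportCost (fun x y => dist x y) μ ν

theorem Continuous.integrable_of_compactSpace {α : Type*} [TopologicalSpace α] [T2Space α]
    [CompactSpace α] [MeasurableSpace α] [OpensMeasurableSpace α] {f : α → ℝ} (hf : Continuous f)
    (μ : Measure α) [IsFiniteMeasure μ] : Integrable f μ :=
  integrableOn_univ.mp (hf.continuousOn.integrableOn_compact isCompact_univ)

section Wasserstein

theorem prod_mem_couplings {α β : Type*} [MeasurableSpace α] [MeasurableSpace β] (μ : Measure α)
    (ν : Measure β) [IsProbabilityMeasure μ] [IsProbabilityMeasure ν] :
    μ.prod ν ∈ Couplings μ ν :=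
  ⟨inferInstance, by simp, by simp⟩

variable {X : Type*} [PseudoMetricSpace X] [MeasurableSpace X]

theorem W1_le_integral_dist {μ ν : Measure X} {γ : Measure (X × X)} (hγ : γ ∈ Couplings μ ν) :
    W1 μ ν ≤ ∫ p, dist p.1 p.2 ∂γ :=
  csInf_le ⟨0, by rintro _ ⟨γ', -, rfl⟩; exact integral_nonneg fun _ => dist_nonneg⟩ ⟨γ, hγ, rfl⟩

theorem exists_mem_couplings_integral_dist_lt (μ ν : Measure X) [IsProbabilityMeasure μ]
    [IsProbabilityMeasure ν] {ε : ℝ} (hε : 0 < ε) :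
    ∃ γ ∈ Couplings μ ν, ∫ p, dist p.1 p.2 ∂γ < W1 μ ν + ε := by
  obtain ⟨_, ⟨γ, hγ, rfl⟩, hlt⟩ :=
    Real.lt_sInf_add_pos (Set.image_nonempty.mpr ⟨_, prod_mem_couplings μ ν⟩) hε
  exact ⟨γ, hγ, hlt⟩

end Wasserstein

section Empirical

variable {X : Type*} [MeasurableSpace X] {n : ℕ}

noncomputable def empiricalMeasure (z : Fin n → X) : Measure X :=
  (n : ℝ≥0∞)⁻¹ • ∑ j, Measure.dirac (z j)

theorem isProbabilityMeasure_empiricalMeasure (hn : n ≠ 0) (z : Fin n → X) :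
    IsProbabilityMeasure (empiricalMeasure z) :=
  ⟨by simp [empiricalMeasure, ENNReal.inv_mul_cancel (Nat.cast_ne_zero.mpr hn)]⟩

theorem map_empiricalMeasure {Y : Type*} [MeasurableSpace Y] {f : X → Y} (hf : Measurable f)
    (z : Fin n → X) : (empiricalMeasure z).map f = empiricalMeasure (f ∘ z) := by
  simp [empiricalMeasure, Measure.map_smul, Measure.map_finset_sum' hf.aemeasurable,
    Measure.map_dirac' hf]

theorem integral_empiricalMeasure [MeasurableSingletonClass X] (f : X → ℝ) (z : Fin n → X) :
    ∫ x, f x ∂empiricalMeasure z = (n : ℝ)⁻¹ * ∑ j, f (z j) := by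
  rw [empiricalMeasure, integral_smul_measure,
    integral_finsetSum_measure fun j _ => integrable_dirac enorm_lt_top]
  simp

theorem empiricalMeasure_pair_mem_couplings (hn : n ≠ 0) (z w : Fin n → X) :
    empiricalMeasure (fun j => (z j, w j)) ∈ Couplings (empiricalMeasure z) (empiricalMeasure w) :=
  ⟨isProbabilityMeasure_empiricalMeasure hn _, map_empiricalMeasure measurable_fst _,
    map_empiricalMeasure measurable_snd _⟩

theorem W1_empiricalMeasure_le [PseudoMetricSpace X] [MeasurableSingletonClass X] (hn : n ≠ 0)
    (z w : Fin n → X) :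
    W1 (empiricalMeasure z) (empiricalMeasure w) ≤ (n : ℝ)⁻¹ * ∑ j, dist (z j) (w j) :=
  (W1_le_integral_dist (empiricalMeasure_pair_mem_couplings hn z w)).trans_eq
    (integral_empiricalMeasure (fun p : X × X => dist p.1 p.2) _)

end Empirical

theorem inv_mul_sum_dist_le_dist {X : Type*} [PseudoMetricSpace X] {n : ℕ} (z w : Fin n → X) :
    (n : ℝ)⁻¹ * ∑ j, dist (z j) (w j) ≤ dist z w := by
  rcases Nat.eq_zero_or_pos n with rfl | hn
  · simp
  calc (n : ℝ)⁻¹ * ∑ j, dist (z j) (w j) ≤ (n : ℝ)⁻¹ * ∑ _j : Fin n, dist z w := by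
        gcongr with j; exact dist_le_pi_dist z w j
    _ = dist z w := by simp [hn.ne']

section MeanFieldLipschitz

variable {Θ X : Type*} [PseudoMetricSpace Θ] [PseudoMetricSpace X] {n : ℕ} {K : ℝ}
  {J : Θ → X → (Fin n → X) → ℝ}

theorem lipschitzWith_uncurry_of_abs_sub_le (hK : 0 ≤ K)
    (hJ : ∀ t t' x y z w, |J t x z - J t' y w| ≤
      K * dist t t' + K * dist x y + K * ((n : ℝ)⁻¹ * ∑ j, dist (z j) (w j)))
    (t : Θ) : LipschitzWith (2 * K).toNNReal (Function.uncurry (J t)) := by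
  refine LipschitzWith.of_dist_le_mul fun u v => ?_
  rw [Real.dist_eq, Real.coe_toNNReal _ (by positivity)]
  calc |J t u.1 u.2 - J t v.1 v.2|
      ≤ K * dist t t + K * dist u.1 v.1 + K * ((n : ℝ)⁻¹ * ∑ j, dist (u.2 j) (v.2 j)) := hJ ..
    _ ≤ K * 0 + K * dist u v + K * dist u v := by
      gcongr
      · exact (dist_self t).le
      · exact le_max_left _ _
      · exact (inv_mul_sum_dist_le_dist _ _).trans (le_max_right _ _)
    _ = 2 * K * dist u v := by ring

end MeanFieldLipschitz

section Pi

variable {ι α β : Type*} [Fintype ι] [MeasurableSpace α] [MeasurableSpace β]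

theorem MeasureTheory.Measure.map_prodMap_pi_map {f : α → β} (hf : Measurable f) (μ : Measure α)
    (ν : ι → Measure α) [IsProbabilityMeasure μ] [∀ i, IsProbabilityMeasure (ν i)] :
    (μ.prod (Measure.pi ν)).map (Prod.map f fun v i => f (v i)) =
      (μ.map f).prod (Measure.pi fun i => (ν i).map f) := by
  have : ∀ i, IsProbabilityMeasure ((ν i).map f) := fun i =>
    Measure.isProbabilityMeasure_map hf.aemeasurable
  rw [← Measure.pi_map_pi fun i => hf.aemeasurable,
    Measure.map_prod_map _ _ hf (by fun_prop : Measurable fun (v : ι → α) i => f (v i))]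

theorem integral_prod_pi_comp_perm {E : Type*} [NormedAddCommGroup E] [NormedSpace ℝ E]
    (μ : Measure α) [SigmaFinite μ] (ν : ι → Measure β) [∀ i, SigmaFinite (ν i)]
    {F : α → (ι → β) → E} (hF : ∀ x (σ : Equiv.Perm ι) z, F x (z ∘ σ) = F x z)
    (σ : Equiv.Perm ι) :
    ∫ u, F u.1 u.2 ∂μ.prod (Measure.pi fun i => ν (σ i)) =
      ∫ u, F u.1 u.2 ∂μ.prod (Measure.pi ν) := by
  let e := MeasurableEquiv.piCongrLeft (fun _ => β) σ
  rw [← ((MeasurePreserving.id μ).prod (measurePreserving_piCongrLeft ν σ)).integral_comp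
    (MeasurableEmbedding.id.prodMap e.measurableEmbedding)]
  refine integral_congr_ae (ae_of_all _ fun u => ?_)
  have he : e u.2 ∘ σ = u.2 := funext (Equiv.piCongrLeft_apply_apply (fun _ => β) σ u.2)
  simp only [Prod.map_fst, Prod.map_snd, id_eq]
  rw [← hF u.1 σ (e u.2), he]

end Pi

theorem abs_integral_map_sub_integral_map_le {γ α β : Type*} [MeasurableSpace γ]
    [MeasurableSpace α] [MeasurableSpace β] {Γ : Measure γ} {φ : γ → α} {ψ : γ → β}
    (hφ : Measurable φ) (hψ : Measurable ψ) {f : α → ℝ} {g : β → ℝ} {c : γ → ℝ}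
    (hf : Integrable f (Γ.map φ)) (hg : Integrable g (Γ.map ψ)) (hc : Integrable c Γ)
    (hfg : ∀ v, |f (φ v) - g (ψ v)| ≤ c v) :
    |∫ a, f a ∂Γ.map φ - ∫ b, g b ∂Γ.map ψ| ≤ ∫ v, c v ∂Γ := by
  have hfφ : Integrable (fun v => f (φ v)) Γ := hf.comp_measurable hφ
  have hgψ : Integrable (fun v => g (ψ v)) Γ := hg.comp_measurable hψ
  rw [integral_map hφ.aemeasurable hf.aestronglyMeasurable,
    integral_map hψ.aemeasurable hg.aestronglyMeasurable, ← integral_sub hfφ hgψ]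
  exact abs_integral_le_integral_abs.trans (integral_mono (hfφ.sub hgψ).abs hc hfg)

section Coupling

variable {X : Type*} [MetricSpace X] [CompactSpace X] [MeasurableSpace X] [BorelSpace X]
  {n : ℕ} {γ₀ : Measure (X × X)} {γ : Fin n → Measure (X × X)}
  [IsProbabilityMeasure γ₀] [∀ j, IsProbabilityMeasure (γ j)]

theorem integral_prod_pi_fst_eq (f : X × X → ℝ) :
    ∫ v, f v.1 ∂γ₀.prod (Measure.pi γ) = ∫ x, f x ∂γ₀ := by
  simp [integral_fun_fst]

theorem integral_prod_pi_eval_eq {f : X × X → ℝ} (hf : Continuous f) (j : Fin n) :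
    ∫ v, f (v.2 j) ∂γ₀.prod (Measure.pi γ) = ∫ x, f x ∂γ j := by
  rw [integral_fun_snd (f := fun w : Fin n → X × X => f (w j)),
    integral_comp_eval (μ := γ) hf.aestronglyMeasurable_of_compactSpace]
  simp

theorem integral_prod_pi_cost (a K : ℝ) :
    ∫ v, (a + K * dist v.1.1 v.1.2 + K * ((n : ℝ)⁻¹ * ∑ j, dist (v.2 j).1 (v.2 j).2))
        ∂γ₀.prod (Measure.pi γ) =
      a + K * ∫ x, dist x.1 x.2 ∂γ₀ + K * ((n : ℝ)⁻¹ * ∑ j, ∫ x, dist x.1 x.2 ∂γ j) := by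
  have hint : ∀ {f : (X × X) × (Fin n → X × X) → ℝ}, Continuous f →
      Integrable f (γ₀.prod (Measure.pi γ)) := fun hf => hf.integrable_of_compactSpace _
  rw [integral_add (hint (by fun_prop)) (hint (by fun_prop)),
    integral_add (integrable_const a) (hint (by fun_prop)), integral_const_mul,
    integral_const_mul, integral_const_mul, integral_finsetSum _ fun j _ => hint (by fun_prop),
    integral_prod_pi_fst_eq (fun x => dist x.1 x.2)]
  simp only [integral_prod_pi_eval_eq (by fun_prop : Continuous fun x : X × X => dist x.1 x.2),
    integral_const, probReal_univ, one_smul]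

end Coupling

section MixedExtension

variable {Θ X : Type*} [PseudoMetricSpace Θ] [MetricSpace X] [CompactSpace X] [MeasurableSpace X]
  [BorelSpace X] {n : ℕ} {K : ℝ} {J : Θ → X → (Fin n → X) → ℝ}

theorem abs_integral_prod_pi_sub_le_of_couplings (hK : 0 ≤ K)
    (hJ : ∀ t t' x y z w, |J t x z - J t' y w| ≤
      K * dist t t' + K * dist x y + K * ((n : ℝ)⁻¹ * ∑ j, dist (z j) (w j)))
    (t t' : Θ) {π η : Measure X} {p q : Fin n → Measure X} {γ₀ : Measure (X × X)}
    {γ : Fin n → Measure (X × X)} (hγ₀ : γ₀ ∈ Couplings π η)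
    (hγ : ∀ j, γ j ∈ Couplings (p j) (q j)) :
    |∫ u, J t u.1 u.2 ∂π.prod (Measure.pi p) - ∫ u, J t' u.1 u.2 ∂η.prod (Measure.pi q)| ≤
      K * dist t t' + K * ∫ x, dist x.1 x.2 ∂γ₀ +
        K * ((n : ℝ)⁻¹ * ∑ j, ∫ x, dist x.1 x.2 ∂γ j) := by
  have := hγ₀.1
  have := fun j => (hγ j).1
  have hπ : (γ₀.prod (Measure.pi γ)).map (Prod.map Prod.fst fun v j => (v j).1) =
      π.prod (Measure.pi p) := by
    rw [Measure.map_prodMap_pi_map measurable_fst, hγ₀.2.1, funext fun j => (hγ j).2.1]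
  have hη : (γ₀.prod (Measure.pi γ)).map (Prod.map Prod.snd fun v j => (v j).2) =
      η.prod (Measure.pi q) := by
    rw [Measure.map_prodMap_pi_map measurable_snd, hγ₀.2.2, funext fun j => (hγ j).2.2]
  have hJint : ∀ s μ, [IsFiniteMeasure μ] →
      Integrable (fun u : X × (Fin n → X) => J s u.1 u.2) μ := fun s μ _ =>
    (lipschitzWith_uncurry_of_abs_sub_le hK hJ s).continuous.integrable_of_compactSpace μ
  rw [← integral_prod_pi_cost, ← hπ, ← hη]
  exact abs_integral_map_sub_integral_map_le (by fun_prop) (by fun_prop) (hJint _ _) (hJint _ _)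
    ((by fun_prop : Continuous _).integrable_of_compactSpace _) fun v => hJ ..

theorem abs_integral_prod_pi_sub_le_W1 (hK : 0 ≤ K)
    (hJ : ∀ t t' x y z w, |J t x z - J t' y w| ≤
      K * dist t t' + K * dist x y + K * ((n : ℝ)⁻¹ * ∑ j, dist (z j) (w j)))
    (t t' : Θ) (π η : Measure X) [IsProbabilityMeasure π] [IsProbabilityMeasure η]
    (p q : Fin n → Measure X) [∀ j, IsProbabilityMeasure (p j)]
    [∀ j, IsProbabilityMeasure (q j)] :
    |∫ u, J t u.1 u.2 ∂π.prod (Measure.pi p) - ∫ u, J t' u.1 u.2 ∂η.prod (Measure.pi q)| ≤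
      K * dist t t' + K * W1 π η + K * ((n : ℝ)⁻¹ * ∑ j, W1 (p j) (q j)) := by
  refine le_of_forall_pos_le_add fun ε hε => ?_
  obtain ⟨δ, hδ, hKδ⟩ : ∃ δ > 0, 2 * K * δ ≤ ε :=
    ⟨ε / (2 * K + 1), by positivity, by rw [mul_div_assoc', div_le_iff₀ (by positivity)]; linarith⟩
  obtain ⟨γ₀, hγ₀, hγ₀δ⟩ := exists_mem_couplings_integral_dist_lt π η hδ
  choose γ hγ hγδ using fun j => exists_mem_couplings_integral_dist_lt (p j) (q j) hδ
  have hmean : (n : ℝ)⁻¹ * ∑ j, ∫ x, dist x.1 x.2 ∂γ j ≤ (n : ℝ)⁻¹ * ∑ j, W1 (p j) (q j) + δ :=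
    calc (n : ℝ)⁻¹ * ∑ j, ∫ x, dist x.1 x.2 ∂γ j
        ≤ (n : ℝ)⁻¹ * ∑ j, (W1 (p j) (q j) + δ) := by gcongr with j; exact (hγδ j).le
      _ = (n : ℝ)⁻¹ * ∑ j, W1 (p j) (q j) + (n : ℝ)⁻¹ * n * δ := by
        simp [Finset.sum_add_distrib, mul_add, mul_assoc]
      _ ≤ (n : ℝ)⁻¹ * ∑ j, W1 (p j) (q j) + δ := by
        gcongr
        exact mul_le_of_le_one_left hδ.le (inv_mul_le_one_of_le₀ le_rfl n.cast_nonneg)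
  calc _ ≤ K * dist t t' + K * ∫ x, dist x.1 x.2 ∂γ₀ +
        K * ((n : ℝ)⁻¹ * ∑ j, ∫ x, dist x.1 x.2 ∂γ j) :=
        abs_integral_prod_pi_sub_le_of_couplings hK hJ t t' hγ₀ hγ
    _ ≤ K * dist t t' + K * (W1 π η + δ) + K * ((n : ℝ)⁻¹ * ∑ j, W1 (p j) (q j) + δ) := by
        gcongr
    _ ≤ K * dist t t' + K * W1 π η + K * ((n : ℝ)⁻¹ * ∑ j, W1 (p j) (q j)) + ε := by
        linarith

end MixedExtension

theorem mixedExtension_lipschitz_estimate_general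
    {Θ X : Type*}
    [MetricSpace Θ]
    [MetricSpace X] [CompactSpace X] [MeasurableSpace X] [BorelSpace X]
    (n : ℕ) (hn : 1 ≤ n) (K : ℝ) (hK : 0 < K)
    (J : Θ → X → (Fin n → X) → ℝ)
    (hsym : ∀ (t : Θ) (x : X) (σ : Equiv.Perm (Fin n)) (z : Fin n → X),
      J t x (z ∘ σ) = J t x z)
    (hlip : ∀ (t t' : Θ) (x y : X) (z w : Fin n → X),
      |J t x z - J t' y w| ≤ K * dist t t' + K * dist x y +
        K * W1 ((n : ℝ≥0∞)⁻¹ • ∑ j : Fin n, Measure.dirac (z j))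
               ((n : ℝ≥0∞)⁻¹ • ∑ j : Fin n, Measure.dirac (w j)))
    (t t' : Θ)
    (π η : Measure X) [IsProbabilityMeasure π] [IsProbabilityMeasure η]
    (p q : Fin n → Measure X)
    (hp : ∀ j, IsProbabilityMeasure (p j)) (hq : ∀ j, IsProbabilityMeasure (q j)) :
    |(∫ u : X × (Fin n → X), J t u.1 u.2 ∂(π.prod (Measure.pi p))) -
        ∫ u : X × (Fin n → X), J t' u.1 u.2 ∂(η.prod (Measure.pi q))| ≤
      K * dist t t' + K * W1 π η +
        K * ⨅ σ : Equiv.Perm (Fin n), (n : ℝ)⁻¹ * ∑ j : Fin n, W1 (p j) (q (σ j)) := by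
  have hJ : ∀ s s' x y z w, |J s x z - J s' y w| ≤
      K * dist s s' + K * dist x y + K * ((n : ℝ)⁻¹ * ∑ j, dist (z j) (w j)) :=
    fun s s' x y z w => (hlip s s' x y z w).trans <| by
      gcongr
      exact W1_empiricalMeasure_le (by omega) z w
  obtain ⟨σ, hσ⟩ := exists_eq_ciInf_of_finite
    (f := fun σ : Equiv.Perm (Fin n) => (n : ℝ)⁻¹ * ∑ j, W1 (p j) (q (σ j)))
  rw [← hσ, ← integral_prod_pi_comp_perm η q (hsym t') σ]
  exact abs_integral_prod_pi_sub_le_W1 hK.le hJ t t' π η p fun j => q (σ j)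

/-- **Lipschitz estimate for the mixed extension.**
Here `N = n + 1 ≥ 2`, a player of type `t` playing `x` against the strategies
`z : Fin n → X` of the `n` other players pays `J t x z`, `J` being symmetric in the
others' strategies and satisfying
`|J t x z - J t' y w| ≤ K d_Θ(t,t') + K d_X(x,y) + K W₁(emp z, emp w)`.
Then the mixed extension `J̄(t, π, p) = ∫ J t x z dπ(x) d(⊗ⱼ p j)(z)` satisfies
`|J̄(t,π,p) - J̄(t',η,q)| ≤ K d_Θ(t,t') + K W₁(π,η) + K min_σ (1/n) Σⱼ W₁(pⱼ, q_{σ(j)})`. -/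
theorem mixedExtension_lipschitz_estimate
    {Θ X : Type*}
    [MetricSpace Θ] [CompactSpace Θ]
    [MetricSpace X] [CompactSpace X] [MeasurableSpace X] [BorelSpace X]
    (n : ℕ) (hn : 1 ≤ n) (K : ℝ) (hK : 0 < K)
    (J : Θ → X → (Fin n → X) → ℝ)
    (hsym : ∀ (t : Θ) (x : X) (σ : Equiv.Perm (Fin n)) (z : Fin n → X),
      J t x (z ∘ σ) = J t x z)
    (hlip : ∀ (t t' : Θ) (x y : X) (z w : Fin n → X),
      |J t x z - J t' y w| ≤ K * dist t t' + K * dist x y +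
        K * W1 ((n : ℝ≥0∞)⁻¹ • ∑ j : Fin n, Measure.dirac (z j))
               ((n : ℝ≥0∞)⁻¹ • ∑ j : Fin n, Measure.dirac (w j)))
    (t t' : Θ)
    (π η : Measure X) [IsProbabilityMeasure π] [IsProbabilityMeasure η]
    (p q : Fin n → Measure X)
    (hp : ∀ j, IsProbabilityMeasure (p j)) (hq : ∀ j, IsProbabilityMeasure (q j)) :
    |(∫ u : X × (Fin n → X), J t u.1 u.2 ∂(π.prod (Measure.pi p))) -
        ∫ u : X × (Fin n → X), J t' u.1 u.2 ∂(η.prod (Measure.pi q))| ≤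
      K * dist t t' + K * W1 π η +
        K * ⨅ σ : Equiv.Perm (Fin n), (n : ℝ)⁻¹ * ∑ j : Fin n, W1 (p j) (q (σ j)) :=
  mixedExtension_lipschitz_estimate_general n hn K hK J hsym hlip t t' π η p q hp hq
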